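/- arXiv:cs/0510027 — 4 statements merged into one kernel-verified Lean document; each statement's English description precedes it below -/
import Mathlib

section
/- In a one-period market with finitely many states, there is no arbitrage (no portfolio with nonpositive cost today whose payoff is nonnegative in every state and strictly positive in at least one state, with strictly negative cost allowed only with nonnegative payoff) if and only if there exists a strictly positive state price vector q such that the price of every traded security equals the q-weighted sum of its state payoffs. -/
/-!
Record a portfolio `θ` by its net cash flows `(-p ⬝ θ, θᵀ D)`, indexed by `Option Ω`. Absence of
arbitrage says exactly that the subspace of attainable cash flows meets the nonnegative orthant
only in `0`. Strictly separating this subspace from the standard simplex yields a functional that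
vanishes on it and is strictly positive on every basis vector (Stiemke's lemma); dividing its
weights on the states by its weight on date `0` gives the state prices. Conversely, with state
prices the cost of a portfolio is the `q`-weighted sum of its payoffs, so it cannot be an arbitrage.
-/

open Matrix

theorem Submodule.apply_eq_zero_of_forall_apply_lt {𝕜 E : Type*} [Field 𝕜] [Preorder 𝕜]
    [AddCommGroup E] [Module 𝕜 E] (L : Submodule 𝕜 E) (f : E →ₗ[𝕜] 𝕜) {u : 𝕜}
    (hf : ∀ x ∈ L, f x < u) {x : E} (hx : x ∈ L) : f x = 0 := by
  by_contra hfx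
  have := hf ((u / f x) • x) (L.smul_mem _ hx)
  rw [map_smul, smul_eq_mul, div_mul_cancel₀ _ hfx] at this
  exact lt_irrefl u this

theorem eq_zero_of_nonneg_of_dotProduct_pos_eq_zero {ι R : Type*} [Fintype ι] [Semiring R]
    [PartialOrder R] [IsOrderedRing R] [NoZeroDivisors R] {x y : ι → R} (hx : 0 ≤ x)
    (hy : ∀ i, 0 < y i) (h : x ⬝ᵥ y = 0) : x = 0 := by
  have hxy := (Finset.sum_eq_zero_iff_of_nonneg fun i _ => mul_nonneg (hx i) (hy i).le).1 h
  funext i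
  exact (mul_eq_zero.1 (hxy i (Finset.mem_univ i))).resolve_right (hy i).ne'

theorem Submodule.exists_pos_forall_dotProduct_eq_zero {ι : Type*} [Fintype ι]
    (L : Submodule ℝ (ι → ℝ)) (hL : ∀ x ∈ L, 0 ≤ x → x = 0) :
    ∃ y : ι → ℝ, (∀ i, 0 < y i) ∧ ∀ x ∈ L, x ⬝ᵥ y = 0 := by
  classical
  have hdisj : Disjoint (L : Set (ι → ℝ)) (stdSimplex ℝ ι) := by
    refine Set.disjoint_left.2 fun x hxL hxΔ => ?_
    simpa [hL x hxL hxΔ.1] using hxΔ.2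
  obtain ⟨f, u, v, hfL, huv, hfΔ⟩ := geometric_hahn_banach_closed_compact L.convex
    L.closed_of_finiteDimensional (convex_stdSimplex ℝ ι) (isCompact_stdSimplex ℝ ι) hdisj
  refine ⟨fun i => f fun j => if i = j then 1 else 0, fun i => ?_, fun x hx => ?_⟩
  · have hu : 0 < u := by simpa using hfL 0 L.zero_mem
    exact hu.trans (huv.trans (hfΔ _ (ite_eq_mem_stdSimplex ℝ i)))
  · exact (f.toLinearMap.pi_apply_eq_sum_univ x).symm.trans
      (L.apply_eq_zero_of_forall_apply_lt f.toLinearMap hfL hx)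

theorem Matrix.exists_pos_mulVec_eq_zero_iff {κ ι : Type*} [Fintype κ] [Fintype ι]
    (A : Matrix κ ι ℝ) :
    (∃ y, (∀ i, 0 < y i) ∧ A *ᵥ y = 0) ↔ ∀ θ, 0 ≤ θ ᵥ* A → θ ᵥ* A = 0 := by
  constructor
  · rintro ⟨y, hy, hAy⟩ θ hθ
    refine eq_zero_of_nonneg_of_dotProduct_pos_eq_zero hθ hy ?_
    rw [← dotProduct_mulVec, hAy, dotProduct_zero]
  · intro h
    obtain ⟨y, hy, hLy⟩ := (LinearMap.range A.vecMulLinear).exists_pos_forall_dotProduct_eq_zero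
      (by rintro _ ⟨θ, rfl⟩; exact h θ)
    refine ⟨y, hy, dotProduct_eq_zero _ fun θ => ?_⟩
    rw [dotProduct_comm, dotProduct_mulVec]
    exact hLy _ ⟨θ, rfl⟩

section Market

variable {m Ω : Type*} (D : Matrix m Ω ℝ) (p : m → ℝ)

/-- The price `p j` is paid at date `0`, indexed by `none`; the payoff `D j ω` is received at
date `1` in state `ω`, indexed by `some ω`. -/
def cashFlow : Matrix m (Option Ω) ℝ :=
  fun j o => o.elim (-p j) (D j)

theorem vecMul_cashFlow_none [Fintype m] (θ : m → ℝ) :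
    (θ ᵥ* cashFlow D p) none = -(θ ⬝ᵥ p) := by
  simp [cashFlow, vecMul, dotProduct]

theorem vecMul_cashFlow_some [Fintype m] (θ : m → ℝ) (ω : Ω) :
    (θ ᵥ* cashFlow D p) (some ω) = (θ ᵥ* D) ω :=
  rfl

def IsArbitrage [Fintype m] (θ : m → ℝ) : Prop :=
  θ ⬝ᵥ p ≤ 0 ∧ 0 ≤ θ ᵥ* D ∧ (∃ ω, 0 < (θ ᵥ* D) ω) ∨ θ ⬝ᵥ p < 0 ∧ 0 ≤ θ ᵥ* D

theorem isArbitrage_iff [Fintype m] (θ : m → ℝ) :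
    IsArbitrage D p θ ↔ 0 ≤ θ ᵥ* cashFlow D p ∧ θ ᵥ* cashFlow D p ≠ 0 := by
  simp only [IsArbitrage, Pi.le_def, Ne, funext_iff, Option.forall, vecMul_cashFlow_none,
    vecMul_cashFlow_some, Pi.zero_apply, neg_nonneg, neg_eq_zero, not_and, not_forall]
  constructor
  · rintro (⟨hcost, hpay, ω, hω⟩ | ⟨hcost, hpay⟩)
    · exact ⟨⟨hcost, hpay⟩, fun _ => ⟨ω, hω.ne'⟩⟩
    · exact ⟨⟨hcost.le, hpay⟩, fun h => absurd h hcost.ne⟩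
  · rintro ⟨⟨hcost, hpay⟩, hne⟩
    rcases hcost.lt_or_eq with hlt | heq
    · exact Or.inr ⟨hlt, hpay⟩
    · obtain ⟨ω, hω⟩ := hne heq
      exact Or.inl ⟨hcost, hpay, ω, (hpay ω).lt_of_ne' hω⟩

theorem cashFlow_mulVec_eq_zero_iff [Fintype Ω] (y : Option Ω → ℝ) :
    cashFlow D p *ᵥ y = 0 ↔ ∀ j, y none * p j = ∑ ω, y (some ω) * D j ω := by
  simp only [funext_iff, mulVec, dotProduct, Fintype.sum_option, cashFlow,
    Option.elim, Pi.zero_apply, neg_mul, neg_add_eq_zero]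
  refine forall_congr' fun j => ?_
  simp only [mul_comm (y _)]

theorem exists_pos_cashFlow_mulVec_eq_zero_iff [Fintype Ω] :
    (∃ y, (∀ o, 0 < y o) ∧ cashFlow D p *ᵥ y = 0) ↔
      ∃ q : Ω → ℝ, (∀ ω, 0 < q ω) ∧ ∀ j, p j = ∑ ω, q ω * D j ω := by
  simp only [cashFlow_mulVec_eq_zero_iff, Option.forall]
  constructor
  · rintro ⟨y, ⟨hy₀, hy⟩, hprice⟩
    refine ⟨fun ω => y (some ω) / y none, fun ω => div_pos (hy ω) hy₀, fun j => ?_⟩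
    simp only [div_mul_eq_mul_div, ← Finset.sum_div, ← hprice, mul_div_cancel_left₀ _ hy₀.ne']
  · rintro ⟨q, hq, hprice⟩
    exact ⟨fun o => o.elim 1 q, ⟨one_pos, hq⟩, fun j => (one_mul _).trans (hprice j)⟩

end Market

/-- Fundamental theorem of asset pricing in a one-period market with finitely
many states: absence of arbitrage is equivalent to the existence of a strictly
positive state price vector. -/
theorem no_arbitrage_iff_state_prices {Ω m : ℕ}
    (D : Fin m → Fin Ω → ℝ) (p : Fin m → ℝ) :
    (¬ ∃ θ : Fin m → ℝ,
        ((∑ j, θ j * p j ≤ 0 ∧ (∀ ω, 0 ≤ ∑ j, θ j * D j ω) ∧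
            ∃ ω, 0 < ∑ j, θ j * D j ω) ∨
          (∑ j, θ j * p j < 0 ∧ ∀ ω, 0 ≤ ∑ j, θ j * D j ω))) ↔
      ∃ q : Fin Ω → ℝ, (∀ ω, 0 < q ω) ∧ ∀ j, p j = ∑ ω, q ω * D j ω := by
  calc _ ↔ ¬ ∃ θ, 0 ≤ θ ᵥ* cashFlow D p ∧ θ ᵥ* cashFlow D p ≠ 0 :=
        not_congr (exists_congr fun θ => isArbitrage_iff D p θ)
    _ ↔ ∀ θ, 0 ≤ θ ᵥ* cashFlow D p → θ ᵥ* cashFlow D p = 0 := by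
        simp only [not_exists, not_and, not_not]
    _ ↔ _ := (cashFlow D p).exists_pos_mulVec_eq_zero_iff.symm
    _ ↔ _ := exists_pos_cashFlow_mulVec_eq_zero_iff D p
end

section
/- Let μ and ν be probability measures on a finite set A = {a_1, ..., a_N} ⊂ R^d such that E_μ[φ] ≥ E_ν[φ] for every concave function φ on the convex hull of A. Then there exists a stochastic matrix Q (nonnegative entries, rows summing to 1) with μ Q = ν and the martingale property Σ_j Q_{ij} a_j = a_i for every i with μ({a_i}) > 0. -/
open Finset

namespace StrassenAux

variable {N d : ℕ}

/-- Weights on `Fin N` representing `x` as a convex combination of the `a j`. -/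
def Lam (a : Fin N → (Fin d → ℝ)) (x : Fin d → ℝ) : Set (Fin N → ℝ) :=
  {w | (∀ j, 0 ≤ w j) ∧ ∑ j, w j = 1 ∧ ∑ j, w j • a j = x}

lemma lam_compact (a : Fin N → (Fin d → ℝ)) (x : Fin d → ℝ) : IsCompact (Lam a x) := by
  have hsub : Lam a x ⊆ Set.Icc (0 : Fin N → ℝ) 1 := by
    rintro w ⟨h0, h1, -⟩
    simp only [Set.mem_Icc, Pi.le_def]
    refine ⟨fun j => h0 j, fun j => ?_⟩
    calc w j ≤ ∑ k, w k := Finset.single_le_sum (fun k _ => h0 k) (mem_univ j)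
      _ = 1 := h1
  refine IsCompact.of_isClosed_subset isCompact_Icc ?_ hsub
  have hset : Lam a x = ({w : Fin N → ℝ | ∀ j, 0 ≤ w j}) ∩ {w | ∑ j, w j = 1}
      ∩ {w | ∑ j, w j • a j = x} := by
    ext w; simp [Lam, and_assoc]
  rw [hset]
  refine (IsClosed.inter (IsClosed.inter ?_ ?_) ?_)
  · rw [Set.setOf_forall]
    exact isClosed_iInter fun j => isClosed_le continuous_const (continuous_apply j)
  · exact isClosed_eq (continuous_finset_sum _ fun i _ => continuous_apply i) continuous_const
  · exact isClosed_eq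
      (continuous_finset_sum _ fun i _ => (continuous_apply i).smul continuous_const)
      continuous_const

/-- The basis vector `e i` lies in `Lam a (a i)`. -/
lemma basis_mem_lam (a : Fin N → (Fin d → ℝ)) (i : Fin N) :
    (fun j => if i = j then (1 : ℝ) else 0) ∈ Lam a (a i) := by
  refine ⟨fun j => by positivity, by simp, ?_⟩
  simp [ite_smul]

/-- Every point of the convex hull has representing weights. -/
lemma lam_nonempty (a : Fin N → (Fin d → ℝ)) {x : Fin d → ℝ}
    (hx : x ∈ convexHull ℝ (Set.range a)) : (Lam a x).Nonempty := by
  rw [convexHull_range_eq_exists_affineCombination] at hx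
  obtain ⟨s, w, h0, h1, hx⟩ := hx
  rw [affineCombination_eq_linear_combination s a w h1] at hx
  refine ⟨fun i => if i ∈ s then w i else 0, fun j => ?_, ?_, ?_⟩
  · simp only
    split
    · exact h0 _ ‹_›
    · exact le_refl 0
  · simp only [Finset.sum_ite_mem, Finset.univ_inter, h1]
  · rw [← hx]
    simp only [ite_smul, zero_smul, Finset.sum_ite_mem, Finset.univ_inter]



lemma lam_comb (a : Fin N → (Fin d → ℝ)) {x y : Fin d → ℝ} {w w' : Fin N → ℝ}
    (hw : w ∈ Lam a x) (hw' : w' ∈ Lam a y) {t s : ℝ} (ht : 0 ≤ t) (hs : 0 ≤ s)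
    (hts : t + s = 1) : t • w + s • w' ∈ Lam a (t • x + s • y) := by
  obtain ⟨hw0, hw1, hw2⟩ := hw
  obtain ⟨hw0', hw1', hw2'⟩ := hw'
  refine ⟨fun j => add_nonneg (mul_nonneg ht (hw0 j)) (mul_nonneg hs (hw0' j)), ?_, ?_⟩
  · simp only [Pi.add_apply, Pi.smul_apply, smul_eq_mul]
    rw [Finset.sum_add_distrib, ← Finset.mul_sum, ← Finset.mul_sum, hw1, hw1']
    simpa using hts
  · simp only [Pi.add_apply, Pi.smul_apply, smul_eq_mul, add_smul, mul_smul]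
    rw [Finset.sum_add_distrib, ← Finset.smul_sum, ← Finset.smul_sum, hw2, hw2']

lemma lam_convex (a : Fin N → (Fin d → ℝ)) (x : Fin d → ℝ) : Convex ℝ (Lam a x) := by
  rintro w hw w' hw' t s ht hs hts
  have h := lam_comb a hw hw' ht hs hts
  rwa [← add_smul, hts, one_smul] at h

end StrassenAux

open StrassenAux in
/-- Blackwell–Stein–Sherman–Cartier–Strassen theorem on a finite set: if `μ`
dominates `ν` for all concave test functions, there is a martingale transition
matrix `Q` with `μ Q = ν`. -/
theorem strassen_martingale_transition {N d : ℕ} (a : Fin N → (Fin d → ℝ))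
    (ha : Function.Injective a)
    (μ ν : Fin N → ℝ) (hμ0 : ∀ i, 0 ≤ μ i) (hν0 : ∀ i, 0 ≤ ν i)
    (hμ1 : ∑ i, μ i = 1) (hν1 : ∑ i, ν i = 1)
    (hmaj : ∀ φ : (Fin d → ℝ) → ℝ, ConcaveOn ℝ (convexHull ℝ (Set.range a)) φ →
      ∑ i, ν i * φ (a i) ≤ ∑ i, μ i * φ (a i)) :
    ∃ Q : Matrix (Fin N) (Fin N) ℝ,
      (∀ i j, 0 ≤ Q i j) ∧ (∀ i, ∑ j, Q i j = 1) ∧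
      (∀ j, ∑ i, μ i * Q i j = ν j) ∧
      (∀ i, 0 < μ i → ∑ j, Q i j • a j = a i) := by
  classical
  set D : Set (Fin N → Fin N → ℝ) := Set.univ.pi (fun i => Lam a (a i)) with hDdef
  set Lfun : (Fin N → Fin N → ℝ) → (Fin N → ℝ) :=
    fun q j => ∑ i, μ i * q i j with hLdef
  set C : Set (Fin N → ℝ) := Lfun '' D with hCdef
  suffices hνC : ν ∈ C by
    obtain ⟨q, hqD, hLq⟩ := hνC
    have hq : ∀ i, q i ∈ Lam a (a i) := fun i => hqD i (Set.mem_univ i)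
    exact ⟨Matrix.of q, fun i j => (hq i).1 j, fun i => (hq i).2.1,
      fun j => congrFun hLq j, fun i _ => (hq i).2.2⟩
  by_contra hνC
  -- separation
  have hDcompact : IsCompact D := isCompact_univ_pi fun i => lam_compact a (a i)
  have hLcont : Continuous Lfun := continuous_pi fun j =>
    continuous_finset_sum _ fun i _ =>
      continuous_const.mul ((continuous_apply j).comp (continuous_apply i))
  have hClin : IsLinearMap ℝ Lfun := by
    constructor
    · intro p q; funext j
      simp [hLdef, mul_add, Finset.sum_add_distrib]
    · intro c q; funext j
      simp [hLdef, Finset.mul_sum, smul_eq_mul, mul_left_comm]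
  have hCconv : Convex ℝ C :=
    (convex_pi fun i _ => lam_convex a (a i)).is_linear_image hClin
  have hCclosed : IsClosed C := (hDcompact.image hLcont).isClosed
  obtain ⟨f, u, hsep, hu⟩ := geometric_hahn_banach_closed_point hCconv hCclosed hνC
  set g : Fin N → ℝ := fun i => f (fun j => if i = j then (1 : ℝ) else 0) with hgdef
  have hf : ∀ x : Fin N → ℝ, f x = ∑ j, x j * g j := by
    intro x
    have hx := pi_eq_sum_univ x
    calc f x = f (∑ i, x i • fun j => if i = j then (1 : ℝ) else 0) := by rw [← hx]
      _ = ∑ i, x i * g i := by rw [map_sum]; simp [hgdef, smul_eq_mul]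
  set val : (Fin N → ℝ) → ℝ := fun w => ∑ j, w j * g j with hvaldef
  have hvalcont : Continuous val :=
    continuous_finset_sum _ fun j _ => (continuous_apply j).mul continuous_const
  set φ : (Fin d → ℝ) → ℝ := fun x => sSup (val '' Lam a x) with hφdef
  have hbdd : ∀ x, BddAbove (val '' Lam a x) := by
    intro x
    refine ⟨∑ j, |g j|, ?_⟩
    rintro _ ⟨w, hw, rfl⟩
    refine Finset.sum_le_sum fun j _ => ?_
    have hle1 : w j ≤ 1 := by
      calc w j ≤ ∑ k, w k := Finset.single_le_sum (fun k _ => hw.1 k) (mem_univ j)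
        _ = 1 := hw.2.1
    calc w j * g j ≤ w j * |g j| := mul_le_mul_of_nonneg_left (le_abs_self _) (hw.1 j)
      _ ≤ 1 * |g j| := mul_le_mul_of_nonneg_right hle1 (abs_nonneg _)
      _ = |g j| := one_mul _
  have hmaxex : ∀ x ∈ convexHull ℝ (Set.range a), ∃ w ∈ Lam a x, φ x = val w := by
    intro x hx
    obtain ⟨w, hwmem, hwmax⟩ := (lam_compact a x).exists_isMaxOn (lam_nonempty a hx)
      hvalcont.continuousOn
    refine ⟨w, hwmem, le_antisymm (csSup_le ⟨val w, ⟨w, hwmem, rfl⟩⟩ ?_)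
      (le_csSup (hbdd x) ⟨w, hwmem, rfl⟩)⟩
    rintro _ ⟨w', hw', rfl⟩
    exact hwmax hw'
  have hφconc : ConcaveOn ℝ (convexHull ℝ (Set.range a)) φ := by
    refine ⟨convex_convexHull ℝ _, ?_⟩
    intro x hx y hy t s ht hs hts
    obtain ⟨wx, hwxm, hwxv⟩ := hmaxex x hx
    obtain ⟨wy, hwym, hwyv⟩ := hmaxex y hy
    have hwmem : (t • wx + s • wy) ∈ Lam a (t • x + s • y) :=
      lam_comb a hwxm hwym ht hs hts
    have hvw : val (t • wx + s • wy) = t * val wx + s * val wy := by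
      simp only [hvaldef, Pi.add_apply, Pi.smul_apply, smul_eq_mul, add_mul, mul_assoc,
        Finset.sum_add_distrib, Finset.mul_sum]
    have hle : val (t • wx + s • wy) ≤ φ (t • x + s • y) :=
      le_csSup (hbdd _) ⟨_, hwmem, rfl⟩
    rw [hvw] at hle
    rw [hwxv, hwyv]
    simpa using hle
  -- the maximizing transition matrix
  have hmaxex' : ∀ i, ∃ w ∈ Lam a (a i), φ (a i) = val w := fun i =>
    hmaxex (a i) (subset_convexHull ℝ _ (Set.mem_range_self i))
  choose W hWmem hWval using hmaxex'
  have hWD : W ∈ D := fun i _ => hWmem i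
  have hlt1 : f (Lfun W) < u := hsep _ ⟨W, hWD, rfl⟩
  have hEq : f (Lfun W) = ∑ i, μ i * φ (a i) := by
    rw [hf]
    have : ∀ j, (∑ i, μ i * W i j) * g j = ∑ i, μ i * (W i j * g j) := by
      intro j; rw [Finset.sum_mul]; exact Finset.sum_congr rfl fun i _ => mul_assoc _ _ _
    rw [Finset.sum_congr rfl fun j _ => this j, Finset.sum_comm]
    refine Finset.sum_congr rfl fun i _ => ?_
    rw [← Finset.mul_sum, hWval i]
  have key1 : ∀ j, g j ≤ φ (a j) := by
    intro j
    refine le_csSup (hbdd _) ⟨_, basis_mem_lam a j, ?_⟩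
    simp [hvaldef, ite_mul]
  have h1 : ∑ i, ν i * φ (a i) ≤ ∑ i, μ i * φ (a i) := hmaj φ hφconc
  have h2 : f ν = ∑ j, ν j * g j := hf ν
  have h3 : ∑ j, ν j * g j ≤ ∑ j, ν j * φ (a j) :=
    Finset.sum_le_sum fun j _ => mul_le_mul_of_nonneg_left (key1 j) (hν0 j)
  linarith
end

section
/- Let p_1, p_2, p_3 be real numbers. There exists a probability measure μ on [0, β] with E_μ[x] = p_1, E_μ[x^2] = p_2, E_μ[x^3] = p_3 if and only if the matrices [[1, p_1],[p_1, p_2]] and [[p_1, p_2],[p_2, p_3]] and [[β − p_1, β p_1 − p_2],[β p_1 − p_2, β p_2 − p_3]] are all positive semidefinite. -/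
/-!
Necessity: for each weight `w ∈ {1, x, β - x}`, nonnegative on `[0, β]`, the quadratic form of the
corresponding matrix at `(u, v)` equals `∫ w x * (u + v * x) ^ 2 ∂μ ≥ 0`.

Sufficiency: a measure with at most two atoms works. If `p₂ = p₁ ^ 2` it is the Dirac mass at `p₁`.
Otherwise the atoms are roots of the orthogonal polynomial
`q x = det !![1, p₁, p₂; p₁, p₂, p₃; 1, x, x ^ 2]`: `q 0` and `q β` are the determinants of the
second and third matrices while `q p₁ = -(p₂ - p₁ ^ 2) ^ 2 < 0`, so `q` has a root in `[0, p₁]` and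
one in `[p₁, β]`. Choosing the weights so that the mean is `p₁`, the relations `q = 0` at both atoms
force the second and third moments to be `p₂` and `p₃`.
-/

open MeasureTheory

theorem Matrix.posSemidef_fin_two_iff_quadForm_nonneg {a b c : ℝ} :
    (!![a, b; b, c] : Matrix (Fin 2) (Fin 2) ℝ).PosSemidef ↔
      ∀ u v : ℝ, 0 ≤ a * u ^ 2 + 2 * b * u * v + c * v ^ 2 := by
  have hquad (x : Fin 2 → ℝ) : star x ⬝ᵥ (!![a, b; b, c] : Matrix (Fin 2) (Fin 2) ℝ).mulVec x =
      a * x 0 ^ 2 + 2 * b * x 0 * x 1 + c * x 1 ^ 2 := by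
    simp only [star_trivial, dotProduct, Matrix.mulVec, Fin.sum_univ_two, Matrix.of_apply,
      Matrix.cons_val_zero, Matrix.cons_val_one]
    ring
  have hherm : (!![a, b; b, c] : Matrix (Fin 2) (Fin 2) ℝ).IsHermitian := by
    ext i j
    fin_cases i <;> fin_cases j <;> rfl
  simp only [Matrix.posSemidef_iff_dotProduct_mulVec, hquad, hherm, true_and]
  exact ⟨fun h u v ↦ by simpa using h ![u, v], fun h x ↦ h (x 0) (x 1)⟩

theorem Matrix.PosSemidef.fin_two_nonneg_and_sq_le {a b c : ℝ}
    (h : (!![a, b; b, c] : Matrix (Fin 2) (Fin 2) ℝ).PosSemidef) :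
    0 ≤ a ∧ 0 ≤ c ∧ b ^ 2 ≤ a * c := by
  have quad := Matrix.posSemidef_fin_two_iff_quadForm_nonneg.mp h
  have ha := quad 1 0
  have hc := quad 0 1
  refine ⟨by linarith, by linarith, ?_⟩
  rcases ha.lt_or_eq with ha | ha
  · nlinarith [quad b (-a)]
  · nlinarith [quad (c + 1) (-b)]

theorem integrable_of_ae_mem_Icc {μ : Measure ℝ} [IsFiniteMeasure μ] {a b : ℝ}
    (hμ : ∀ᵐ x ∂μ, x ∈ Set.Icc a b) {f : ℝ → ℝ} (hf : Continuous f) : Integrable f μ := by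
  simpa [IntegrableOn, Measure.restrict_eq_self_of_ae_mem hμ] using
    hf.integrableOn_Icc (μ := μ) (a := a) (b := b)

theorem integral_cubic_of_ae_mem_Icc {μ : Measure ℝ} [IsProbabilityMeasure μ] {a b : ℝ}
    (hμ : ∀ᵐ x ∂μ, x ∈ Set.Icc a b) (c₀ c₁ c₂ c₃ : ℝ) :
    ∫ x, c₀ + c₁ * x + c₂ * x ^ 2 + c₃ * x ^ 3 ∂μ =
      c₀ + c₁ * ∫ x, x ∂μ + c₂ * ∫ x, x ^ 2 ∂μ + c₃ * ∫ x, x ^ 3 ∂μ := by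
  rw [integral_add, integral_add, integral_add, integral_const, integral_const_mul,
    integral_const_mul, integral_const_mul, probReal_univ, one_smul]
  all_goals exact integrable_of_ae_mem_Icc hμ (by fun_prop)

theorem posSemidef_localizingMatrix {μ : Measure ℝ} [IsProbabilityMeasure μ] {a b : ℝ}
    (hμ : ∀ᵐ x ∂μ, x ∈ Set.Icc a b) {p₁ p₂ p₃ : ℝ} (h₁ : ∫ x, x ∂μ = p₁)
    (h₂ : ∫ x, x ^ 2 ∂μ = p₂) (h₃ : ∫ x, x ^ 3 ∂μ = p₃) {α γ : ℝ}
    (hw : ∀ x ∈ Set.Icc a b, 0 ≤ α + γ * x) :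
    (!![α + γ * p₁, α * p₁ + γ * p₂; α * p₁ + γ * p₂, α * p₂ + γ * p₃] :
      Matrix (Fin 2) (Fin 2) ℝ).PosSemidef := by
  refine Matrix.posSemidef_fin_two_iff_quadForm_nonneg.mpr fun u v ↦ ?_
  have hpos : 0 ≤ ∫ x, (α + γ * x) * (u + v * x) ^ 2 ∂μ :=
    integral_nonneg_of_ae <| hμ.mono fun x hx ↦ mul_nonneg (hw x hx) (sq_nonneg _)
  have hexp : ∫ x, (α + γ * x) * (u + v * x) ^ 2 ∂μ =
      α * u ^ 2 + (2 * α * u * v + γ * u ^ 2) * p₁ + (α * v ^ 2 + 2 * γ * u * v) * p₂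
        + γ * v ^ 2 * p₃ := by
    rw [← h₁, ← h₂, ← h₃, ← integral_cubic_of_ae_mem_Icc hμ]
    congr 1 with x
    ring
  linear_combination hpos + hexp

noncomputable def twoPointMeasure (s t x y : ℝ) : Measure ℝ :=
  ENNReal.ofReal s • Measure.dirac x + ENNReal.ofReal t • Measure.dirac y

theorem isProbabilityMeasure_twoPointMeasure {s t : ℝ} (hs : 0 ≤ s) (ht : 0 ≤ t)
    (hst : s + t = 1) (x y : ℝ) : IsProbabilityMeasure (twoPointMeasure s t x y) :=
  ⟨by simp [twoPointMeasure, ← ENNReal.ofReal_add hs ht, hst]⟩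

theorem twoPointMeasure_compl_eq_zero (s t : ℝ) {x y : ℝ} {A : Set ℝ} (hA : MeasurableSet A)
    (hx : x ∈ A) (hy : y ∈ A) : twoPointMeasure s t x y Aᶜ = 0 := by
  simp [twoPointMeasure, Measure.dirac_apply' _ hA.compl, hx, hy]

theorem integral_twoPointMeasure {s t : ℝ} (hs : 0 ≤ s) (ht : 0 ≤ t) (x y : ℝ) (f : ℝ → ℝ) :
    ∫ z, f z ∂twoPointMeasure s t x y = s * f x + t * f y := by
  rw [twoPointMeasure, integral_add_measure, integral_smul_measure, integral_smul_measure,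
    integral_dirac, integral_dirac, ENNReal.toReal_ofReal hs, ENNReal.toReal_ofReal ht,
    smul_eq_mul, smul_eq_mul]
  all_goals exact (integrable_dirac enorm_lt_top).smul_measure ENNReal.ofReal_ne_top

noncomputable def momentQuadratic (p₁ p₂ p₃ x : ℝ) : ℝ :=
  !![1, p₁, p₂; p₁, p₂, p₃; 1, x, x ^ 2].det

theorem momentQuadratic_eq (p₁ p₂ p₃ x : ℝ) : momentQuadratic p₁ p₂ p₃ x =
    (p₂ - p₁ ^ 2) * x ^ 2 - (p₃ - p₁ * p₂) * x + (p₁ * p₃ - p₂ ^ 2) := by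
  rw [momentQuadratic, Matrix.det_fin_three]
  simp only [Matrix.of_apply, Matrix.cons_val', Matrix.cons_val_zero, Matrix.cons_val_one,
    Matrix.cons_val, Matrix.cons_val_fin_one]
  ring

theorem continuous_momentQuadratic (p₁ p₂ p₃ : ℝ) : Continuous (momentQuadratic p₁ p₂ p₃) := by
  simp_rw [funext (momentQuadratic_eq p₁ p₂ p₃)]
  fun_prop

theorem moments_eq_of_momentQuadratic_eq_zero {p₁ p₂ p₃ s t x y : ℝ} (hvar : p₁ ^ 2 < p₂)
    (hst : s + t = 1) (h₁ : s * x + t * y = p₁) (hx : momentQuadratic p₁ p₂ p₃ x = 0)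
    (hy : momentQuadratic p₁ p₂ p₃ y = 0) :
    s * x ^ 2 + t * y ^ 2 = p₂ ∧ s * x ^ 3 + t * y ^ 3 = p₃ := by
  rw [momentQuadratic_eq] at hx hy
  have hne : p₂ - p₁ ^ 2 ≠ 0 := by linarith
  have h₂ : s * x ^ 2 + t * y ^ 2 = p₂ := by
    refine mul_left_cancel₀ hne ?_
    linear_combination s * hx + t * hy + (p₃ - p₁ * p₂) * h₁ - (p₁ * p₃ - p₂ ^ 2) * hst
  refine ⟨h₂, mul_left_cancel₀ hne ?_⟩
  linear_combination s * x * hx + t * y * hy + (p₃ - p₁ * p₂) * h₂ - (p₁ * p₃ - p₂ ^ 2) * h₁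

theorem exists_twoPoint_moments_of_posSemidef {β p₁ p₂ p₃ : ℝ}
    (h₁ : (!![1, p₁; p₁, p₂] : Matrix (Fin 2) (Fin 2) ℝ).PosSemidef)
    (h₂ : (!![p₁, p₂; p₂, p₃] : Matrix (Fin 2) (Fin 2) ℝ).PosSemidef)
    (h₃ : (!![β - p₁, β * p₁ - p₂; β * p₁ - p₂, β * p₂ - p₃] :
      Matrix (Fin 2) (Fin 2) ℝ).PosSemidef) :
    ∃ s t x y : ℝ, 0 ≤ s ∧ 0 ≤ t ∧ s + t = 1 ∧ x ∈ Set.Icc 0 β ∧ y ∈ Set.Icc 0 β ∧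
      s * x + t * y = p₁ ∧ s * x ^ 2 + t * y ^ 2 = p₂ ∧ s * x ^ 3 + t * y ^ 3 = p₃ := by
  obtain ⟨-, -, hvar⟩ := h₁.fin_two_nonneg_and_sq_le
  rw [one_mul] at hvar
  obtain ⟨hp₁, hp₃, hdet₂⟩ := h₂.fin_two_nonneg_and_sq_le
  obtain ⟨hβp₁, hβp₃, hdet₃⟩ := h₃.fin_two_nonneg_and_sq_le
  rcases hvar.eq_or_lt with hvar | hvar
  · obtain rfl : p₂ = p₁ ^ 2 := by linarith
    have hp₃ : p₃ = p₁ ^ 3 := by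
      rcases hp₁.eq_or_lt with rfl | hp₁pos
      · nlinarith
      · rcases hβp₁.eq_or_lt with hβ | hβ <;> nlinarith
    exact ⟨1, 0, p₁, p₁, zero_le_one, le_rfl, by ring, ⟨hp₁, by linarith⟩, ⟨hp₁, by linarith⟩,
      by ring, by ring, by rw [hp₃]; ring⟩
  have hq₀ : 0 ≤ momentQuadratic p₁ p₂ p₃ 0 := by rw [momentQuadratic_eq]; linarith
  have hqβ : 0 ≤ momentQuadratic p₁ p₂ p₃ β := by rw [momentQuadratic_eq]; linarith
  have hqp₁ : momentQuadratic p₁ p₂ p₃ p₁ ≤ 0 := by rw [momentQuadratic_eq]; nlinarith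
  obtain ⟨x, ⟨hx₀, hxp₁⟩, hx⟩ := intermediate_value_Icc' hp₁
    (continuous_momentQuadratic p₁ p₂ p₃).continuousOn ⟨hqp₁, hq₀⟩
  obtain ⟨y, ⟨hp₁y, hyβ⟩, hy⟩ := intermediate_value_Icc (by linarith)
    (continuous_momentQuadratic p₁ p₂ p₃).continuousOn ⟨hqp₁, hqβ⟩
  obtain ⟨s, t, hs, ht, hst, hmean⟩ : p₁ ∈ segment ℝ x y := by
    rw [segment_eq_Icc (hxp₁.trans hp₁y)]
    exact ⟨hxp₁, hp₁y⟩
  simp only [smul_eq_mul] at hmean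
  exact ⟨s, t, x, y, hs, ht, hst, ⟨hx₀, by linarith⟩, ⟨by linarith, hyβ⟩, hmean,
    moments_eq_of_momentQuadratic_eq_zero hvar hst hmean hx hy⟩

/-- Truncated moment problem on `[0, β]` for moments up to order 3: a
representing probability measure exists iff the Hankel moment matrix and the
two localizing matrices are positive semidefinite. -/
theorem truncated_moment_problem_interval (β p1 p2 p3 : ℝ) :
    (∃ μ : Measure ℝ, IsProbabilityMeasure μ ∧ μ (Set.Icc 0 β)ᶜ = 0 ∧
      ∫ x, x ∂μ = p1 ∧ ∫ x, x ^ 2 ∂μ = p2 ∧ ∫ x, x ^ 3 ∂μ = p3) ↔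
    ((!![1, p1; p1, p2] : Matrix (Fin 2) (Fin 2) ℝ).PosSemidef ∧
      (!![p1, p2; p2, p3] : Matrix (Fin 2) (Fin 2) ℝ).PosSemidef ∧
      (!![β - p1, β * p1 - p2; β * p1 - p2, β * p2 - p3] :
        Matrix (Fin 2) (Fin 2) ℝ).PosSemidef) := by
  constructor
  · rintro ⟨μ, hμ, hsupp, h₁, h₂, h₃⟩
    have hae : ∀ᵐ x ∂μ, x ∈ Set.Icc 0 β := mem_ae_iff.mpr hsupp
    refine ⟨?_, ?_, ?_⟩
    · simpa using posSemidef_localizingMatrix hae h₁ h₂ h₃ (α := 1) (γ := 0) (by simp)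
    · simpa using posSemidef_localizingMatrix hae h₁ h₂ h₃ (α := 0) (γ := 1) fun x hx ↦ by
        simpa using hx.1
    · simpa [sub_eq_add_neg] using
        posSemidef_localizingMatrix hae h₁ h₂ h₃ (α := β) (γ := -1) fun x hx ↦ by
          linarith [hx.2]
  · rintro ⟨h₁, h₂, h₃⟩
    obtain ⟨s, t, x, y, hs, ht, hst, hx, hy, m₁, m₂, m₃⟩ := exists_twoPoint_moments_of_posSemidef h₁ h₂ h₃
    refine ⟨twoPointMeasure s t x y, isProbabilityMeasure_twoPointMeasure hs ht hst x y,
      twoPointMeasure_compl_eq_zero s t measurableSet_Icc hx hy, ?_, ?_, ?_⟩ <;>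
      rwa [integral_twoPointMeasure hs ht]
end

section
/- Let f : S → R be a function on the commutative semigroup S of monomials in one variable (isomorphic to (N, +)) with f(1) = 1, such that both (f(x^{i+j}))_{i,j≥0} and (f(x^{i+j+1}))_{i,j≥0} are positive semidefinite (as infinite matrices, i.e., every finite principal submatrix is PSD), and (β f(x^{i+j}) − f(x^{i+j+1}))_{i,j≥0} is positive semidefinite. Then f(x^k) ∈ [0, β^k] for all k ≥ 0. -/
/-!
The diagonals of the three Hankel matrices give `f k ≥ 0` and `f (2m+1) ≤ β f (2m)`, and a
`2 × 2` minor of the shifted Hankel matrix gives the log-convexity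
`f (2m+2)² ≤ f (2m+1) f (2m+3)`. Chaining these,
`f (2m+2)² ≤ β² f (2m) f (2m+2)`, so the even moments grow at most by `β²` per step;
the odd ones then follow from `f (2m+1) ≤ β f (2m)`.
-/

theorem Matrix.PosSemidef.apply_sq_le_mul {n : Type*} [Fintype n] {M : Matrix n n ℝ}
    (hM : M.PosSemidef) (i j : n) : M i j ^ 2 ≤ M i i * M j j := by
  have hdet := (hM.submatrix ![i, j]).det_nonneg
  have hsymm : M j i = M i j := hM.isHermitian.apply i j
  simp only [Matrix.det_fin_two, Matrix.submatrix_apply, Matrix.cons_val_zero,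
    Matrix.cons_val_one] at hdet
  rw [hsymm] at hdet
  linarith

def IsPosSemidefHankel (g : ℕ → ℝ) : Prop :=
  ∀ N : ℕ, (Matrix.of fun i j : Fin N => g ((i : ℕ) + (j : ℕ))).PosSemidef

namespace IsPosSemidefHankel

variable {g : ℕ → ℝ}

theorem nonneg_two_mul (hg : IsPosSemidefHankel g) (m : ℕ) : 0 ≤ g (2 * m) := by
  simpa [two_mul] using (hg (m + 1)).diag_nonneg (i := Fin.last m)

theorem sq_le_mul (hg : IsPosSemidefHankel g) (i j : ℕ) :
    g (i + j) ^ 2 ≤ g (2 * i) * g (2 * j) := by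
  simpa [two_mul] using (hg (i + j + 1)).apply_sq_le_mul ⟨i, by omega⟩ ⟨j, by omega⟩

end IsPosSemidefHankel

section Moments

variable {β : ℝ} {f : ℕ → ℝ}

theorem nonneg_of_isPosSemidefHankel (h1 : IsPosSemidefHankel f)
    (h2 : IsPosSemidefHankel fun n => f (n + 1)) (k : ℕ) : 0 ≤ f k := by
  obtain ⟨m, rfl | rfl⟩ := Nat.even_or_odd' k
  · exact h1.nonneg_two_mul m
  · exact h2.nonneg_two_mul m

theorem apply_two_mul_le_pow (hf0 : f 0 = 1) (hnonneg : ∀ k, 0 ≤ f k)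
    (hodd : ∀ m, f (2 * m + 1) ≤ β * f (2 * m))
    (hlogconvex : ∀ m, f (2 * m + 2) ^ 2 ≤ f (2 * m + 1) * f (2 * m + 3)) (m : ℕ) :
    f (2 * m) ≤ β ^ (2 * m) := by
  induction m with
  | zero => simp [hf0]
  | succ m ih =>
    set a := f (2 * m + 2)
    have hodd' : f (2 * m + 3) ≤ β * a := hodd (m + 1)
    have hstep : a ^ 2 ≤ β ^ (2 * m + 2) * a :=
      calc a ^ 2 ≤ f (2 * m + 1) * f (2 * m + 3) := hlogconvex m
        _ ≤ (β * f (2 * m)) * (β * a) :=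
          mul_le_mul (hodd m) hodd' (hnonneg _) ((hnonneg _).trans (hodd m))
        _ = β ^ 2 * f (2 * m) * a := by ring
        _ ≤ β ^ 2 * β ^ (2 * m) * a := by gcongr; exact hnonneg _
        _ = β ^ (2 * m + 2) * a := by ring
    have hpow : 0 ≤ β ^ (2 * m + 2) := (even_two_mul (m + 1)).pow_nonneg β
    have ha : 0 ≤ a := hnonneg _
    show a ≤ β ^ (2 * m + 2)
    nlinarith

end Moments

/-- In the one-dimensional case (payoff semigroup of monomials, identified with
`(ℕ, +)` via `k ↦ x^k`), the positivity conditions (i)–(iii) of the main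
theorem force the candidate moments `f(x^k)` to lie in `[0, β^k]`. -/
theorem moments_bounded_of_positivity (β : ℝ) (f : ℕ → ℝ) (hf0 : f 0 = 1)
    (h1 : ∀ N : ℕ, (Matrix.of fun i j : Fin N => f ((i : ℕ) + (j : ℕ))).PosSemidef)
    (h2 : ∀ N : ℕ, (Matrix.of fun i j : Fin N => f ((i : ℕ) + (j : ℕ) + 1)).PosSemidef)
    (h3 : ∀ N : ℕ, (Matrix.of fun i j : Fin N =>
      β * f ((i : ℕ) + (j : ℕ)) - f ((i : ℕ) + (j : ℕ) + 1)).PosSemidef) :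
    ∀ k : ℕ, 0 ≤ f k ∧ f k ≤ β ^ k := by
  have hnonneg := nonneg_of_isPosSemidefHankel h1 h2
  have hodd (m : ℕ) : f (2 * m + 1) ≤ β * f (2 * m) :=
    sub_nonneg.mp (IsPosSemidefHankel.nonneg_two_mul (g := fun n => β * f n - f (n + 1)) h3 m)
  have hlogconvex (m : ℕ) : f (2 * m + 2) ^ 2 ≤ f (2 * m + 1) * f (2 * m + 3) := by
    convert IsPosSemidefHankel.sq_le_mul (g := fun n => f (n + 1)) h2 m (m + 1) using 3 <;> ring
  have hβ : 0 ≤ β := by simpa [hf0] using (hnonneg 1).trans (hodd 0)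
  have heven := apply_two_mul_le_pow hf0 hnonneg hodd hlogconvex
  intro k
  refine ⟨hnonneg k, ?_⟩
  obtain ⟨m, rfl | rfl⟩ := Nat.even_or_odd' k
  · exact heven m
  · calc f (2 * m + 1) ≤ β * f (2 * m) := hodd m
      _ ≤ β * β ^ (2 * m) := by gcongr; exact heven m
      _ = β ^ (2 * m + 1) := by ring
end
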